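/- Online imitation learning upper bound (equation (5)): let π* and π be two policies in a finite-horizon Markov decision process whose action space A is a bounded measurable subset of a separable real normed vector space, and suppose there is a constant C ≥ 0 such that for every time 0 ≤ t < T and every state s ∈ S the map a ↦ Q_{π*}^t(s,a) is Lipschitz with constant at most C. Then J(π) − J(π*) ≤ C · Σ_{t=0}^{T−1} ∫_S ( ∫_A ∫_A ‖a − a*‖ π*(da*|s) π(da|s) ) d_π^t(ds), where d_π^t is the state marginal at time t under π. -/

import Mathlib

open MeasureTheory ProbabilityTheory
open scoped NNReal ENNReal

/-! Finite-horizon MDP setup: `S` states, `A` actions, `P` transition kernel,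
`c` instantaneous cost, horizon `T`; policies are Markov kernels from `S` to `A`. -/

/-- Value function of a policy `π`, defined by backward recursion:
`V^T ≡ 0` and `V^t(s) = ∫_A (c(s,a) + ∫_S V^{t+1}(s') P(ds'|s,a)) π(da|s)` for `t < T`. -/
noncomputable def mdpV {S A : Type*} [MeasurableSpace S] [MeasurableSpace A]
    (P : Kernel (S × A) S) (c : S → A → ℝ) (T : ℕ) (π : Kernel S A) :
    ℕ → S → ℝ
  | t => fun s =>
      if _h : t < T then
        ∫ a, (c s a + ∫ s', mdpV P c T π (t + 1) s' ∂(P (s, a))) ∂(π s)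
      else 0
  termination_by t => T - t
  decreasing_by omega

/-- Q-function: `Q^t(s,a) = c(s,a) + ∫_S V^{t+1}(s') P(ds'|s,a)`. -/
noncomputable def mdpQ {S A : Type*} [MeasurableSpace S] [MeasurableSpace A]
    (P : Kernel (S × A) S) (c : S → A → ℝ) (T : ℕ) (π : Kernel S A)
    (t : ℕ) (s : S) (a : A) : ℝ :=
  c s a + ∫ s', mdpV P c T π (t + 1) s' ∂(P (s, a))

/-- Total cost `J(π) = ∫_S V^0(s) μ₀(ds)`. -/
noncomputable def mdpJ {S A : Type*} [MeasurableSpace S] [MeasurableSpace A]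
    (μ₀ : Measure S) (P : Kernel (S × A) S) (c : S → A → ℝ) (T : ℕ)
    (π : Kernel S A) : ℝ :=
  ∫ s, mdpV P c T π 0 s ∂μ₀

/-- One-step state transition kernel under policy `π`:
`s ↦ ∫_A P(·|s,a) π(da|s)`. -/
noncomputable def mdpStep {S A : Type*} [MeasurableSpace S] [MeasurableSpace A]
    (P : Kernel (S × A) S) (π : Kernel S A) [IsSFiniteKernel π] : Kernel S S :=
  P ∘ₖ (Kernel.id ×ₖ π)

/-- State marginals: `d_π^0 = μ₀` and
`d_π^{t+1}(B) = ∫_S ∫_A P(B|s,a) π(da|s) d_π^t(ds)`. -/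
noncomputable def mdpD {S A : Type*} [MeasurableSpace S] [MeasurableSpace A]
    (μ₀ : Measure S) (P : Kernel (S × A) S) (π : Kernel S A)
    [IsSFiniteKernel π] : ℕ → Measure S
  | 0 => μ₀
  | t + 1 => (mdpD μ₀ P π t).bind (mdpStep P π)

section Aux

open Filter

variable {S A : Type*} [MeasurableSpace S] [MeasurableSpace A]

/-- Integrability of bounded measurable functions on finite measures. -/
lemma mdp_integrable_of_bound {X : Type*} [MeasurableSpace X] (μ : Measure X)
    [IsFiniteMeasure μ] {f : X → ℝ} (hf : AEStronglyMeasurable f μ) (M : ℝ)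
    (h : ∀ x, |f x| ≤ M) : Integrable f μ :=
  Integrable.mono' (integrable_const M) hf
    (Eventually.of_forall (fun x => by simpa [Real.norm_eq_abs] using h x))

variable (P : Kernel (S × A) S) (c : S → A → ℝ) (T : ℕ) (π : Kernel S A)

lemma mdpV_of_lt {t : ℕ} (ht : t < T) (s : S) :
    mdpV P c T π t s = ∫ a, mdpQ P c T π t s a ∂(π s) := by
  rw [mdpV]; simp [ht, mdpQ]

lemma mdpV_of_le {t : ℕ} (ht : T ≤ t) (s : S) :
    mdpV P c T π t s = 0 := by
  rw [mdpV]; simp [Nat.not_lt.mpr ht]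

variable [IsSFiniteKernel P] [IsSFiniteKernel π]

lemma measurable_mdpV (hc : Measurable (Function.uncurry c)) (t : ℕ) :
    Measurable (mdpV P c T π t) := by
  suffices h : ∀ n t, T - t ≤ n → Measurable (mdpV P c T π t) by
    exact h T t (by omega)
  intro n
  induction n with
  | zero =>
    intro t ht
    have : mdpV P c T π t = fun _ => 0 := funext (fun s => mdpV_of_le P c T π (by omega) s)
    rw [this]; exact measurable_const
  | succ n ih =>
    intro t ht
    by_cases htT : t < T
    · have hV1 : Measurable (mdpV P c T π (t + 1)) := ih (t + 1) (by omega)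
      have hQ : StronglyMeasurable (fun p : S × A => mdpQ P c T π t p.1 p.2) := by
        have h2 : StronglyMeasurable
            (fun p : S × A => ∫ s', mdpV P c T π (t + 1) s' ∂(P p)) := by
          exact StronglyMeasurable.integral_kernel_prod_right'
            (f := fun q : (S × A) × S => mdpV P c T π (t + 1) q.2)
            ((hV1.comp measurable_snd).stronglyMeasurable)
        exact (hc.stronglyMeasurable.add h2)
      have : mdpV P c T π t = fun s => ∫ a, mdpQ P c T π t s a ∂(π s) :=
        funext (fun s => mdpV_of_lt P c T π htT s)
      rw [this]
      exact (StronglyMeasurable.integral_kernel_prod_right' (κ := π) hQ).measurable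
    · have : mdpV P c T π t = fun _ => 0 := funext (fun s => mdpV_of_le P c T π (by omega) s)
      rw [this]; exact measurable_const

lemma measurable_mdpQ (hc : Measurable (Function.uncurry c)) (t : ℕ) :
    Measurable (fun p : S × A => mdpQ P c T π t p.1 p.2) := by
  have hV1 : Measurable (mdpV P c T π (t + 1)) := measurable_mdpV P c T π hc (t + 1)
  have h2 : StronglyMeasurable
      (fun p : S × A => ∫ s', mdpV P c T π (t + 1) s' ∂(P p)) :=
    StronglyMeasurable.integral_kernel_prod_right'
      (f := fun q : (S × A) × S => mdpV P c T π (t + 1) q.2)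
      ((hV1.comp measurable_snd).stronglyMeasurable)
  exact hc.add h2.measurable

end Aux
section Aux2

open Filter

variable {S A : Type*} [MeasurableSpace S] [MeasurableSpace A]
  (P : Kernel (S × A) S) (c : S → A → ℝ) (T : ℕ) (π : Kernel S A)
  [IsMarkovKernel P] [IsMarkovKernel π]

lemma abs_mdpV_le (B : ℝ) (hc : ∀ s a, |c s a| ≤ B) (t : ℕ) (s : S) :
    |mdpV P c T π t s| ≤ ((T - t : ℕ) : ℝ) * max B 0 := by
  suffices h : ∀ n t, T - t ≤ n → ∀ s : S,
      |mdpV P c T π t s| ≤ ((T - t : ℕ) : ℝ) * max B 0 by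
    exact h T t (by omega) s
  intro n
  induction n with
  | zero =>
    intro t ht s
    rw [mdpV_of_le P c T π (by omega) s]
    simp only [abs_zero]
    positivity
  | succ n ih =>
    intro t ht s
    by_cases htT : t < T
    · rw [mdpV_of_lt P c T π htT s]
      have hQb : ∀ a : A, ‖mdpQ P c T π t s a‖ ≤
          max B 0 + ((T - (t + 1) : ℕ) : ℝ) * max B 0 := by
        intro a
        rw [Real.norm_eq_abs, mdpQ]
        refine (abs_add_le _ _).trans (add_le_add ((hc s a).trans (le_max_left _ _)) ?_)
        rw [← Real.norm_eq_abs]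
        calc ‖∫ s', mdpV P c T π (t + 1) s' ∂(P (s, a))‖
            ≤ (((T - (t + 1) : ℕ) : ℝ) * max B 0) * ((P (s, a)) Set.univ).toReal :=
              norm_integral_le_of_norm_le_const (Eventually.of_forall (fun s' => by
                rw [Real.norm_eq_abs]; exact ih (t + 1) (by omega) s'))
          _ = ((T - (t + 1) : ℕ) : ℝ) * max B 0 := by simp
      calc |∫ a, mdpQ P c T π t s a ∂(π s)|
          ≤ (max B 0 + ((T - (t + 1) : ℕ) : ℝ) * max B 0) * ((π s) Set.univ).toReal := by
            rw [← Real.norm_eq_abs]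
            exact norm_integral_le_of_norm_le_const (Eventually.of_forall hQb)
        _ = max B 0 + ((T - (t + 1) : ℕ) : ℝ) * max B 0 := by simp
        _ = ((T - t : ℕ) : ℝ) * max B 0 := by
            have h1 : (T - t : ℕ) = (T - (t + 1) : ℕ) + 1 := by omega
            rw [h1]; push_cast; ring
    · rw [mdpV_of_le P c T π (by omega) s]
      simp only [abs_zero]
      positivity

lemma abs_mdpQ_le (B : ℝ) (hc : ∀ s a, |c s a| ≤ B) (t : ℕ) (s : S) (a : A) :
    |mdpQ P c T π t s a| ≤ max B 0 + (T : ℝ) * max B 0 := by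
  rw [mdpQ]
  refine (abs_add_le _ _).trans (add_le_add ((hc s a).trans (le_max_left _ _)) ?_)
  rw [← Real.norm_eq_abs]
  calc ‖∫ s', mdpV P c T π (t + 1) s' ∂(P (s, a))‖
      ≤ (((T - (t + 1) : ℕ) : ℝ) * max B 0) * ((P (s, a)) Set.univ).toReal :=
        norm_integral_le_of_norm_le_const (Eventually.of_forall (fun s' => by
          rw [Real.norm_eq_abs]; exact abs_mdpV_le P c T π B hc (t + 1) s'))
    _ = ((T - (t + 1) : ℕ) : ℝ) * max B 0 := by simp
    _ ≤ (T : ℝ) * max B 0 := by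
        have : ((T - (t + 1) : ℕ) : ℝ) ≤ (T : ℝ) := by exact_mod_cast Nat.sub_le T (t + 1)
        exact mul_le_mul_of_nonneg_right this (le_max_right _ _)

instance mdpStep_isMarkov : IsMarkovKernel (mdpStep P π) := by
  rw [mdpStep]; infer_instance

lemma mdp_bind_eq_map (μ : Measure S) [SFinite μ] {Y : Type*} [MeasurableSpace Y]
    (κ : Kernel S Y) [IsSFiniteKernel κ] :
    μ.bind κ = (μ ⊗ₘ κ).map Prod.snd := by
  ext s hs
  rw [Measure.bind_apply hs (Kernel.measurable _).aemeasurable, Measure.map_apply measurable_snd hs,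
    Measure.compProd_apply (measurable_snd hs)]
  rfl

lemma mdp_integral_bind {Y : Type*} [MeasurableSpace Y] (μ : Measure S) [IsFiniteMeasure μ]
    (κ : Kernel S Y) [IsMarkovKernel κ] {g : Y → ℝ} (hg : Measurable g) (M : ℝ)
    (hM : ∀ y, |g y| ≤ M) :
    ∫ y, g y ∂(μ.bind κ) = ∫ x, ∫ y, g y ∂(κ x) ∂μ := by
  rw [mdp_bind_eq_map, integral_map measurable_snd.aemeasurable hg.aestronglyMeasurable]
  exact Measure.integral_compProd (mdp_integrable_of_bound _
    ((hg.comp measurable_snd).aestronglyMeasurable) M (fun p => hM p.2))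

end Aux2
section Aux3

open Filter

variable {S A : Type*} [MeasurableSpace S] [MeasurableSpace A]
  (P : Kernel (S × A) S) (c : S → A → ℝ) (T : ℕ) (π : Kernel S A)
  [IsMarkovKernel P] [IsMarkovKernel π]

lemma isProb_mdpD (μ₀ : Measure S) [IsProbabilityMeasure μ₀] :
    ∀ t, IsProbabilityMeasure (mdpD μ₀ P π t)
  | 0 => by rw [mdpD]; infer_instance
  | t + 1 => by
    have := isProb_mdpD μ₀ t
    rw [mdpD]
    constructor
    rw [Measure.bind_apply MeasurableSet.univ (Kernel.measurable _).aemeasurable]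
    simp [measure_univ]

lemma mdp_integral_step {g : S → ℝ} (hg : Measurable g) (M : ℝ)
    (hM : ∀ s', |g s'| ≤ M) (s : S) :
    ∫ s', g s' ∂(mdpStep P π s) = ∫ a, ∫ s', g s' ∂(P (s, a)) ∂(π s) := by
  have hq : StronglyMeasurable (fun p : S × A => ∫ s', g s' ∂(P p)) :=
    StronglyMeasurable.integral_kernel_prod_right'
      (f := fun q : (S × A) × S => g q.2) ((hg.comp measurable_snd).stronglyMeasurable)
  have hqb : ∀ p : S × A, |∫ s', g s' ∂(P p)| ≤ M := by
    intro p
    rw [← Real.norm_eq_abs]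
    calc ‖∫ s', g s' ∂(P p)‖ ≤ M * ((P p) Set.univ).toReal :=
          norm_integral_le_of_norm_le_const (Eventually.of_forall (fun s' => by
            rw [Real.norm_eq_abs]; exact hM s'))
      _ = M := by simp
  rw [mdpStep, Kernel.comp_apply, mdp_integral_bind _ _ hg M hM,
    Kernel.prod_apply, Kernel.id_apply]
  have h1 : ∫ p, (∫ s', g s' ∂(P p)) ∂((Measure.dirac s).prod (π s))
      = ∫ x, ∫ a, (∫ s', g s' ∂(P (x, a))) ∂(π s) ∂(Measure.dirac s) := by
    exact MeasureTheory.integral_prod _ (mdp_integrable_of_bound _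
      hq.aestronglyMeasurable M hqb)
  rw [h1]
  have houter : StronglyMeasurable (fun x : S => ∫ a, (∫ s', g s' ∂(P (x, a))) ∂(π s)) := by
    exact StronglyMeasurable.integral_prod_right'
      (f := fun p : S × A => ∫ s', g s' ∂(P p)) hq
  rw [integral_dirac' _ _ houter]

variable (μ₀ : Measure S) [IsProbabilityMeasure μ₀]

/-- Key one-step identity, for an arbitrary evaluation policy `ρ`. -/
lemma mdp_step_identity (hc : Measurable (Function.uncurry c)) (B : ℝ)
    (hcb : ∀ s a, |c s a| ≤ B)
    (ρ : Kernel S A) [IsMarkovKernel ρ] {t : ℕ} (ht : t < T) :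
    ∫ s, (∫ a, mdpQ P c T ρ t s a ∂(π s)) ∂(mdpD μ₀ P π t)
      = (∫ s, (∫ a, c s a ∂(π s)) ∂(mdpD μ₀ P π t))
        + ∫ s', mdpV P c T ρ (t + 1) s' ∂(mdpD μ₀ P π (t + 1)) := by
  have hprob := isProb_mdpD P π μ₀
  have hVmes : Measurable (mdpV P c T ρ (t + 1)) := measurable_mdpV P c T ρ hc (t + 1)
  have hVb : ∀ s', |mdpV P c T ρ (t + 1) s'| ≤ ((T - (t+1) : ℕ) : ℝ) * max B 0 :=
    fun s' => abs_mdpV_le P c T ρ B hcb (t + 1) s'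
  set M1 : ℝ := ((T - (t+1) : ℕ) : ℝ) * max B 0 with hM1
  -- pointwise splitting of the inner integral
  have hsplit : ∀ s : S, (∫ a, mdpQ P c T ρ t s a ∂(π s))
      = (∫ a, c s a ∂(π s)) + ∫ a, (∫ s', mdpV P c T ρ (t + 1) s' ∂(P (s, a))) ∂(π s) := by
    intro s
    rw [show (fun a => mdpQ P c T ρ t s a)
        = fun a => c s a + ∫ s', mdpV P c T ρ (t + 1) s' ∂(P (s, a)) from rfl]
    have hcs : Measurable (c s) := by
      have := hc.comp (measurable_prodMk_left (x := s))
      exact this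
    refine integral_add ?_ ?_
    · exact mdp_integrable_of_bound _ hcs.aestronglyMeasurable B (fun a => hcb s a)
    · have hq : StronglyMeasurable (fun p : S × A => ∫ s', mdpV P c T ρ (t + 1) s' ∂(P p)) :=
        StronglyMeasurable.integral_kernel_prod_right'
          (f := fun q : (S × A) × S => mdpV P c T ρ (t + 1) q.2)
          ((hVmes.comp measurable_snd).stronglyMeasurable)
      have hqs : Measurable (fun a : A => ∫ s', mdpV P c T ρ (t + 1) s' ∂(P (s, a))) := by
        have := hq.measurable.comp (measurable_prodMk_left (x := s))
        exact this
      refine mdp_integrable_of_bound _ hqs.aestronglyMeasurable M1 (fun a => ?_)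
      rw [← Real.norm_eq_abs]
      calc ‖∫ s', mdpV P c T ρ (t + 1) s' ∂(P (s, a))‖ ≤ M1 * ((P (s, a)) Set.univ).toReal :=
            norm_integral_le_of_norm_le_const (Eventually.of_forall (fun s' => by
              rw [Real.norm_eq_abs]; exact hVb s'))
        _ = M1 := by simp
  have := hprob t
  have := hprob (t + 1)
  have hq : StronglyMeasurable (fun p : S × A => ∫ s', mdpV P c T ρ (t + 1) s' ∂(P p)) :=
    StronglyMeasurable.integral_kernel_prod_right'
      (f := fun q : (S × A) × S => mdpV P c T ρ (t + 1) q.2)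
      ((hVmes.comp measurable_snd).stronglyMeasurable)
  have hqb : ∀ p : S × A, |∫ s', mdpV P c T ρ (t + 1) s' ∂(P p)| ≤ M1 := by
    intro p
    rw [← Real.norm_eq_abs]
    calc ‖∫ s', mdpV P c T ρ (t + 1) s' ∂(P p)‖ ≤ M1 * ((P p) Set.univ).toReal :=
          norm_integral_le_of_norm_le_const (Eventually.of_forall (fun s' => by
            rw [Real.norm_eq_abs]; exact hVb s'))
      _ = M1 := by simp
  have hcbar_meas : StronglyMeasurable (fun s : S => ∫ a, c s a ∂(π s)) :=
    StronglyMeasurable.integral_kernel_prod_right'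
      (f := fun p : S × A => c p.1 p.2) hc.stronglyMeasurable
  have hcbar_b : ∀ s : S, |∫ a, c s a ∂(π s)| ≤ max B 0 := by
    intro s
    rw [← Real.norm_eq_abs]
    calc ‖∫ a, c s a ∂(π s)‖ ≤ max B 0 * ((π s) Set.univ).toReal :=
          norm_integral_le_of_norm_le_const (Eventually.of_forall (fun a => by
            rw [Real.norm_eq_abs]; exact (hcb s a).trans (le_max_left _ _)))
      _ = max B 0 := by simp
  have hqbar_meas : StronglyMeasurable
      (fun s : S => ∫ a, (∫ s', mdpV P c T ρ (t + 1) s' ∂(P (s, a))) ∂(π s)) :=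
    StronglyMeasurable.integral_kernel_prod_right' (κ := π) hq
  have hqbar_b : ∀ s : S,
      |∫ a, (∫ s', mdpV P c T ρ (t + 1) s' ∂(P (s, a))) ∂(π s)| ≤ M1 := by
    intro s
    rw [← Real.norm_eq_abs]
    calc ‖∫ a, (∫ s', mdpV P c T ρ (t + 1) s' ∂(P (s, a))) ∂(π s)‖
        ≤ M1 * ((π s) Set.univ).toReal :=
          norm_integral_le_of_norm_le_const (Eventually.of_forall (fun a => by
            rw [Real.norm_eq_abs]; exact hqb (s, a)))
      _ = M1 := by simp
  calc ∫ s, (∫ a, mdpQ P c T ρ t s a ∂(π s)) ∂(mdpD μ₀ P π t)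
      = ∫ s, ((∫ a, c s a ∂(π s))
          + ∫ a, (∫ s', mdpV P c T ρ (t + 1) s' ∂(P (s, a))) ∂(π s)) ∂(mdpD μ₀ P π t) := by
        exact integral_congr_ae (Eventually.of_forall hsplit)
    _ = (∫ s, (∫ a, c s a ∂(π s)) ∂(mdpD μ₀ P π t))
        + ∫ s, (∫ a, (∫ s', mdpV P c T ρ (t + 1) s' ∂(P (s, a))) ∂(π s)) ∂(mdpD μ₀ P π t) := by
        refine integral_add ?_ ?_
        · exact mdp_integrable_of_bound _ hcbar_meas.aestronglyMeasurable (max B 0) hcbar_b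
        · exact mdp_integrable_of_bound _ hqbar_meas.aestronglyMeasurable M1 hqbar_b
    _ = (∫ s, (∫ a, c s a ∂(π s)) ∂(mdpD μ₀ P π t))
        + ∫ s', mdpV P c T ρ (t + 1) s' ∂(mdpD μ₀ P π (t + 1)) := by
        congr 1
        rw [show mdpD μ₀ P π (t + 1) = (mdpD μ₀ P π t).bind (mdpStep P π) from rfl,
          mdp_integral_bind _ _ hVmes M1 hVb]
        exact (integral_congr_ae (Eventually.of_forall (fun s =>
          (mdp_integral_step P π hVmes M1 hVb s)))).symm

end Aux3
section Aux4

open Filter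

variable {S A : Type*} [MeasurableSpace S] [MeasurableSpace A]
  (P : Kernel (S × A) S) (c : S → A → ℝ) (T : ℕ) (π : Kernel S A)
  [IsMarkovKernel P] [IsMarkovKernel π]
  (μ₀ : Measure S) [IsProbabilityMeasure μ₀]

lemma mdp_main (hc : Measurable (Function.uncurry c)) (B : ℝ)
    (hcb : ∀ s a, |c s a| ≤ B)
    (πstar : Kernel S A) [IsMarkovKernel πstar]
    (W : S → ℝ) (hWmeas : Measurable W) (MW : ℝ) (hWb : ∀ s, |W s| ≤ MW)
    (hgap : ∀ t < T, ∀ s : S,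
      (∫ a, mdpQ P c T πstar t s a ∂(π s)) - mdpV P c T πstar t s ≤ W s) :
    ∀ k t, t + k = T →
      (∫ s, mdpV P c T π t s ∂(mdpD μ₀ P π t))
        - (∫ s, mdpV P c T πstar t s ∂(mdpD μ₀ P π t))
        ≤ ∑ u ∈ Finset.Ico t T, ∫ s, W s ∂(mdpD μ₀ P π u) := by
  have hprob := isProb_mdpD P π μ₀
  intro k
  induction k with
  | zero =>
    intro t htk
    have h1 : ∀ ρ : Kernel S A, (∫ s, mdpV P c T ρ t s ∂(mdpD μ₀ P π t)) = 0 := by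
      intro ρ
      rw [integral_congr_ae (Eventually.of_forall
        (fun s => mdpV_of_le P c T ρ (by omega) s))]
      simp
    rw [h1 π, h1 πstar]
    have : t = T := by omega
    subst this
    rw [Finset.Ico_self, Finset.sum_empty]
    simp
  | succ k ih =>
    intro t htk
    have ht : t < T := by omega
    have := hprob t
    -- measurability / bounds for the "Qbar" functions
    have hQs : ∀ ρ : Kernel S A, ∀ _ : IsMarkovKernel ρ,
        StronglyMeasurable (fun s : S => ∫ a, mdpQ P c T ρ t s a ∂(π s)) := by
      intro ρ hρ
      exact StronglyMeasurable.integral_kernel_prod_right' (κ := π)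
        ((measurable_mdpQ P c T ρ hc t).stronglyMeasurable)
    set MQ : ℝ := max B 0 + (T : ℝ) * max B 0 with hMQ
    have hQb : ∀ (ρ : Kernel S A), ∀ _ : IsMarkovKernel ρ, ∀ s : S,
        |∫ a, mdpQ P c T ρ t s a ∂(π s)| ≤ MQ := by
      intro ρ hρ s
      rw [← Real.norm_eq_abs]
      calc ‖∫ a, mdpQ P c T ρ t s a ∂(π s)‖ ≤ MQ * ((π s) Set.univ).toReal :=
            norm_integral_le_of_norm_le_const (Eventually.of_forall (fun a => by
              rw [Real.norm_eq_abs]; exact abs_mdpQ_le P c T ρ B hcb t s a))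
        _ = MQ := by simp
    -- rewrite ∫ V_π^t as ∫ Qbar_π
    have hVpi : (∫ s, mdpV P c T π t s ∂(mdpD μ₀ P π t))
        = ∫ s, (∫ a, mdpQ P c T π t s a ∂(π s)) ∂(mdpD μ₀ P π t) :=
      integral_congr_ae (Eventually.of_forall (fun s => mdpV_of_lt P c T π ht s))
    have hstep_pi := mdp_step_identity P c T π μ₀ hc B hcb π (t := t) ht
    have hstep_star := mdp_step_identity P c T π μ₀ hc B hcb πstar (t := t) ht
    -- gap bound at time t
    have hgapt : (∫ s, (∫ a, mdpQ P c T πstar t s a ∂(π s)) ∂(mdpD μ₀ P π t))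
        - (∫ s, mdpV P c T πstar t s ∂(mdpD μ₀ P π t))
        ≤ ∫ s, W s ∂(mdpD μ₀ P π t) := by
      have hint1 : Integrable (fun s : S => ∫ a, mdpQ P c T πstar t s a ∂(π s))
          (mdpD μ₀ P π t) :=
        mdp_integrable_of_bound _ (hQs πstar inferInstance).aestronglyMeasurable MQ
          (hQb πstar inferInstance)
      have hint2 : Integrable (mdpV P c T πstar t) (mdpD μ₀ P π t) :=
        mdp_integrable_of_bound _ (measurable_mdpV P c T πstar hc t).aestronglyMeasurable
          _ (abs_mdpV_le P c T πstar B hcb t)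
      rw [← integral_sub hint1 hint2]
      exact integral_mono (hint1.sub hint2)
        (mdp_integrable_of_bound _ hWmeas.aestronglyMeasurable MW hWb)
        (fun s => hgap t ht s)
    have hih := ih (t + 1) (by omega)
    have hsum : ∑ u ∈ Finset.Ico t T, ∫ s, W s ∂(mdpD μ₀ P π u)
        = (∫ s, W s ∂(mdpD μ₀ P π t))
          + ∑ u ∈ Finset.Ico (t + 1) T, ∫ s, W s ∂(mdpD μ₀ P π u) :=
      Finset.sum_eq_sum_Ico_succ_bot ht _
    rw [hsum]
    linarith [hstep_pi, hstep_star, hgapt, hih, hVpi]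

end Aux4
/-- **Online imitation learning upper bound** (equation (5)): the action space is a
bounded measurable subset `Aset` of a separable real normed vector space `E`; if every
`a ↦ Q_{π*}^t(s,a)` is Lipschitz with constant at most `C`, then
`J(π) − J(π*) ≤ C Σ_{t<T} ∫_S ∫_A ∫_A ‖a − a*‖ π*(da*|s) π(da|s) d_π^t(ds)`. -/
theorem online_imitation_learning_upper_bound
    {S E : Type*} [MeasurableSpace S] [StandardBorelSpace S]
    [NormedAddCommGroup E] [NormedSpace ℝ E] [TopologicalSpace.SeparableSpace E]
    [MeasurableSpace E] [BorelSpace E]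
    (Aset : Set E) (hA_meas : MeasurableSet Aset) (hA_bdd : Bornology.IsBounded Aset)
    (μ₀ : Measure S) [IsProbabilityMeasure μ₀]
    (P : Kernel (S × ↥Aset) S) [IsMarkovKernel P]
    (c : S → ↥Aset → ℝ) (hc_meas : Measurable (Function.uncurry c))
    (B : ℝ) (hc_bdd : ∀ s a, |c s a| ≤ B)
    (T : ℕ)
    (πstar π : Kernel S ↥Aset) [IsMarkovKernel πstar] [IsMarkovKernel π]
    (C : ℝ≥0)
    (hLip : ∀ t < T, ∀ s : S, LipschitzWith C (fun a : ↥Aset => mdpQ P c T πstar t s a)) :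
    mdpJ μ₀ P c T π - mdpJ μ₀ P c T πstar ≤
      (C : ℝ) * ∑ t ∈ Finset.range T,
        ∫ s, (∫ a, ∫ astar, ‖(a : E) - (astar : E)‖ ∂(πstar s) ∂(π s))
          ∂(mdpD μ₀ P π t) := by
  classical
  haveI : SecondCountableTopology E := UniformSpace.secondCountable_of_separable E
  obtain ⟨R, hR⟩ := isBounded_iff_forall_norm_le.mp hA_bdd
  -- the norm integrand and its properties
  have hnrm : Measurable (fun p : ↥Aset × ↥Aset => ‖(p.1 : E) - (p.2 : E)‖) :=
    ((measurable_subtype_coe.comp measurable_fst).sub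
      (measurable_subtype_coe.comp measurable_snd)).norm
  have hnrm_b : ∀ p : ↥Aset × ↥Aset, |‖(p.1 : E) - (p.2 : E)‖| ≤ R + R := by
    intro p
    rw [abs_norm]
    exact (norm_sub_le _ _).trans (add_le_add (hR _ p.1.2) (hR _ p.2.2))
  -- inner integral as a function of (s, a)
  set inn : S × ↥Aset → ℝ :=
    fun p => ∫ astar, ‖(p.2 : E) - (astar : E)‖ ∂(πstar p.1) with hinn_def
  have hinn_meas : StronglyMeasurable inn := by
    exact StronglyMeasurable.integral_kernel_prod_right'
      (κ := πstar.comap Prod.fst measurable_fst)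
      (f := fun q : (S × ↥Aset) × ↥Aset => ‖(q.1.2 : E) - (q.2 : E)‖)
      (((measurable_subtype_coe.comp (measurable_snd.comp measurable_fst)).sub
        (measurable_subtype_coe.comp measurable_snd)).norm.stronglyMeasurable)
  have hinn_b : ∀ p : S × ↥Aset, |inn p| ≤ R + R := by
    intro p
    rw [← Real.norm_eq_abs]
    calc ‖inn p‖ ≤ (R + R) * ((πstar p.1) Set.univ).toReal :=
          norm_integral_le_of_norm_le_const (Filter.Eventually.of_forall (fun a => by
            rw [Real.norm_eq_abs]; exact hnrm_b (p.2, a)))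
      _ = R + R := by simp
  -- the witness function w
  set w : S → ℝ := fun s => ∫ a, inn (s, a) ∂(π s) with hw_def
  have hw_meas : Measurable w :=
    (StronglyMeasurable.integral_kernel_prod_right' (κ := π) hinn_meas).measurable
  have hw_b : ∀ s, |w s| ≤ R + R := by
    intro s
    rw [← Real.norm_eq_abs]
    calc ‖w s‖ ≤ (R + R) * ((π s) Set.univ).toReal :=
          norm_integral_le_of_norm_le_const (Filter.Eventually.of_forall (fun a => by
            rw [Real.norm_eq_abs]; exact hinn_b (s, a)))
      _ = R + R := by simp
  -- gap bound
  have hgap : ∀ t < T, ∀ s : S,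
      (∫ a, mdpQ P c T πstar t s a ∂(π s)) - mdpV P c T πstar t s ≤ (C : ℝ) * w s := by
    intro t ht s
    have hQa : Measurable (fun a : ↥Aset => mdpQ P c T πstar t s a) := by
      have := (measurable_mdpQ P c T πstar hc_meas t).comp
        (measurable_prodMk_left (x := s))
      exact this
    set MQ : ℝ := max B 0 + (T : ℝ) * max B 0 with hMQ
    have hQab : ∀ a, |mdpQ P c T πstar t s a| ≤ MQ :=
      fun a => abs_mdpQ_le P c T πstar B hc_bdd t s a
    have hQint : ∀ (μ : Measure ↥Aset) (_ : IsProbabilityMeasure μ),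
        Integrable (fun a => mdpQ P c T πstar t s a) μ :=
      fun μ hμ => mdp_integrable_of_bound _ hQa.aestronglyMeasurable MQ hQab
    set K : ℝ := ∫ astar, mdpQ P c T πstar t s astar ∂(πstar s) with hK
    have hV : mdpV P c T πstar t s = K := mdpV_of_lt P c T πstar ht s
    rw [hV]
    have h1 : (∫ a, mdpQ P c T πstar t s a ∂(π s)) - K
        = ∫ a, (mdpQ P c T πstar t s a - K) ∂(π s) := by
      rw [integral_sub (hQint _ inferInstance) (integrable_const K), integral_const]
      simp
    have h2 : ∀ a : ↥Aset, mdpQ P c T πstar t s a - K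
        = ∫ astar, (mdpQ P c T πstar t s a - mdpQ P c T πstar t s astar) ∂(πstar s) := by
      intro a
      rw [integral_sub (integrable_const _) (hQint _ inferInstance), integral_const]
      simp [hK]
    have hptw : ∀ a astar : ↥Aset,
        mdpQ P c T πstar t s a - mdpQ P c T πstar t s astar
          ≤ (C : ℝ) * ‖(a : E) - (astar : E)‖ := by
      intro a astar
      have := (hLip t ht s).dist_le_mul a astar
      rw [Real.dist_eq] at this
      calc mdpQ P c T πstar t s a - mdpQ P c T πstar t s astar
          ≤ |mdpQ P c T πstar t s a - mdpQ P c T πstar t s astar| := le_abs_self _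
        _ ≤ (C : ℝ) * dist a astar := this
        _ = (C : ℝ) * ‖(a : E) - (astar : E)‖ := by
            rw [Subtype.dist_eq, dist_eq_norm]
    have hCn_meas : ∀ a : ↥Aset,
        Measurable (fun astar : ↥Aset => (C : ℝ) * ‖(a : E) - (astar : E)‖) := by
      intro a
      exact (measurable_const.sub measurable_subtype_coe).norm.const_mul _
    have h3 : ∀ a : ↥Aset, mdpQ P c T πstar t s a - K ≤ (C : ℝ) * inn (s, a) := by
      intro a
      rw [h2 a]
      have hCinn : (C : ℝ) * inn (s, a)
          = ∫ astar, (C : ℝ) * ‖(a : E) - (astar : E)‖ ∂(πstar s) :=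
        (integral_const_mul _ _).symm
      rw [hCinn]
      refine integral_mono ((integrable_const _).sub (hQint _ inferInstance)) ?_
        (fun astar => hptw a astar)
      exact mdp_integrable_of_bound _ (hCn_meas a).aestronglyMeasurable ((C : ℝ) * (R + R))
        (fun astar => by
          rw [abs_mul, abs_norm, NNReal.abs_eq]
          exact mul_le_mul_of_nonneg_left (by simpa using hnrm_b (a, astar)) C.coe_nonneg)
    -- integrate over a
    rw [h1]
    have h4 : (C : ℝ) * w s = ∫ a, (C : ℝ) * inn (s, a) ∂(π s) :=
      (integral_const_mul _ _).symm
    rw [h4]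
    refine integral_mono ((hQint _ inferInstance).sub (integrable_const K)) ?_ h3
    have hinn_s : Measurable (fun a : ↥Aset => inn (s, a)) := by
      have := hinn_meas.measurable.comp (measurable_prodMk_left (x := s))
      exact this
    exact mdp_integrable_of_bound _ (hinn_s.const_mul _).aestronglyMeasurable
      ((C : ℝ) * (R + R)) (fun a => by
        rw [abs_mul, NNReal.abs_eq]
        exact mul_le_mul_of_nonneg_left (hinn_b (s, a)) C.coe_nonneg)
  -- main induction
  have hmain := mdp_main P c T π μ₀ hc_meas B hc_bdd πstar
    (fun s => (C : ℝ) * w s) (hw_meas.const_mul _) ((C : ℝ) * (R + R))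
    (fun s => by
      rw [abs_mul, NNReal.abs_eq]
      exact mul_le_mul_of_nonneg_left (hw_b s) C.coe_nonneg)
    hgap T 0 (by omega)
  have hd0 : mdpD μ₀ P π 0 = μ₀ := rfl
  rw [hd0] at hmain
  have hJ : mdpJ μ₀ P c T π - mdpJ μ₀ P c T πstar
      = (∫ s, mdpV P c T π 0 s ∂μ₀) - ∫ s, mdpV P c T πstar 0 s ∂μ₀ := rfl
  rw [hJ]
  refine hmain.trans (le_of_eq ?_)
  rw [Finset.range_eq_Ico, Finset.mul_sum]
  refine Finset.sum_congr rfl (fun u _ => ?_)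
  exact integral_const_mul _ _
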